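/- Let A : ℝ^{n_1×n_2} → ℝ^N be a linear map, 𝟏 ∈ ℝ^{n_1×n_2} the matrix of all ones, G_1 ∈ ℝ^{n_1×r} and R_1 ∈ ℝ^{n_1×ρ}. Define μ_aug = inf { ‖A((G_1|R_1)Hᵀ)‖ : H ∈ ℝ^{n_2×(r+ρ)}, ⟨(G_1|R_1)Hᵀ, 𝟏⟩ = 1 } and μ_ALS = inf { ‖A(G_1 G_2ᵀ)‖ : G_2 ∈ ℝ^{n_2×r}, ⟨G_1 G_2ᵀ, 𝟏⟩ = 1 }. Then μ_aug ≤ μ_ALS; moreover for any G_2 ∈ ℝ^{n_2×r}, R_2 ∈ ℝ^{n_2×ρ}, and α ∈ ℝ such that ⟨G_1 G_2ᵀ + α R_1 R_2ᵀ, 𝟏⟩ = 1, it holds that μ_aug ≤ ‖A(G_1 G_2ᵀ + α R_1 R_2ᵀ)‖. -/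

import Mathlib

open scoped BigOperators ENNReal
open Matrix

/-- `μ_aug`: the infimum (in `ℝ≥0∞`, so `∞` if infeasible) of `‖A((G₁|R₁)Hᵀ)‖`
over all `H ∈ ℝ^{n₂×(r+ρ)}` with `⟨(G₁|R₁)Hᵀ, 𝟏⟩ = 1` (Frobenius inner product
with the all-ones matrix, i.e. the sum of all entries equals 1). -/
noncomputable def muAug (n1 n2 N r ρ : ℕ)
    (A : Matrix (Fin n1) (Fin n2) ℝ →ₗ[ℝ] EuclideanSpace ℝ (Fin N))
    (G1 : Matrix (Fin n1) (Fin r) ℝ) (R1 : Matrix (Fin n1) (Fin ρ) ℝ) : ℝ≥0∞ :=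
  ⨅ (H : Matrix (Fin n2) (Fin r ⊕ Fin ρ) ℝ)
    (_ : ∑ i, ∑ j, (Matrix.fromCols G1 R1 * Hᵀ) i j = 1),
      (‖A (Matrix.fromCols G1 R1 * Hᵀ)‖₊ : ℝ≥0∞)

/-- `μ_ALS`: the infimum (in `ℝ≥0∞`) of `‖A(G₁G₂ᵀ)‖` over all `G₂ ∈ ℝ^{n₂×r}`
with `⟨G₁G₂ᵀ, 𝟏⟩ = 1`. -/
noncomputable def muALS (n1 n2 N r : ℕ)
    (A : Matrix (Fin n1) (Fin n2) ℝ →ₗ[ℝ] EuclideanSpace ℝ (Fin N))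
    (G1 : Matrix (Fin n1) (Fin r) ℝ) : ℝ≥0∞ :=
  ⨅ (G2 : Matrix (Fin n2) (Fin r) ℝ)
    (_ : ∑ i, ∑ j, (G1 * G2ᵀ) i j = 1),
      (‖A (G1 * G2ᵀ)‖₊ : ℝ≥0∞)

/-
`(G₁|R₁)(G₂|αR₂)ᵀ = G₁G₂ᵀ + αR₁R₂ᵀ`, so every steepest-descent update, and (with
`α = 0`) every ALS update, is a feasible point of the augmented problem.
-/

theorem Matrix.fromCols_mul_transpose_fromCols {m n p q α : Type*} [Fintype p] [Fintype q]
    [Semiring α] (A : Matrix m p α) (B : Matrix m q α) (C : Matrix n p α)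
    (D : Matrix n q α) : fromCols A B * (fromCols C D)ᵀ = A * Cᵀ + B * Dᵀ := by
  rw [transpose_fromCols, fromCols_mul_fromRows]

section

variable {n1 n2 N r ρ : ℕ} (A : Matrix (Fin n1) (Fin n2) ℝ →ₗ[ℝ] EuclideanSpace ℝ (Fin N))
  (G1 : Matrix (Fin n1) (Fin r) ℝ) (R1 : Matrix (Fin n1) (Fin ρ) ℝ)

theorem muAug_le_of_sum_eq_one (H : Matrix (Fin n2) (Fin r ⊕ Fin ρ) ℝ)
    (hH : ∑ i, ∑ j, (fromCols G1 R1 * Hᵀ) i j = 1) :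
    muAug n1 n2 N r ρ A G1 R1 ≤ (‖A (fromCols G1 R1 * Hᵀ)‖₊ : ℝ≥0∞) :=
  iInf₂_le H hH

theorem muAug_le_nnnorm_add_smul (G2 : Matrix (Fin n2) (Fin r) ℝ)
    (R2 : Matrix (Fin n2) (Fin ρ) ℝ) (α : ℝ)
    (h : ∑ i, ∑ j, (G1 * G2ᵀ + α • (R1 * R2ᵀ)) i j = 1) :
    muAug n1 n2 N r ρ A G1 R1 ≤ (‖A (G1 * G2ᵀ + α • (R1 * R2ᵀ))‖₊ : ℝ≥0∞) := by
  have hH : fromCols G1 R1 * (fromCols G2 (α • R2))ᵀ = G1 * G2ᵀ + α • (R1 * R2ᵀ) := by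
    rw [fromCols_mul_transpose_fromCols, transpose_smul, Matrix.mul_smul]
  rw [← hH] at h ⊢
  exact muAug_le_of_sum_eq_one A G1 R1 _ h

theorem muAug_le_muALS : muAug n1 n2 N r ρ A G1 R1 ≤ muALS n1 n2 N r A G1 :=
  le_iInf₂ fun G2 hG2 => by
    simpa using muAug_le_nnnorm_add_smul A G1 R1 G2 0 0 (by simpa using hG2)

end

/-- One half-sweep of AMEn (optimizing the second factor after augmenting the
first factor by gradient information `R = R₁R₂ᵀ`) is at least as good as one
step of ALS without augmentation (`μ_aug ≤ μ_ALS`) and at least as good as one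
step of steepest descent: `μ_aug ≤ ‖A(G₁G₂ᵀ + αR₁R₂ᵀ)‖` for any feasible
steepest-descent update. -/
theorem statement11 (n1 n2 N r ρ : ℕ)
    (A : Matrix (Fin n1) (Fin n2) ℝ →ₗ[ℝ] EuclideanSpace ℝ (Fin N))
    (G1 : Matrix (Fin n1) (Fin r) ℝ) (R1 : Matrix (Fin n1) (Fin ρ) ℝ) :
    muAug n1 n2 N r ρ A G1 R1 ≤ muALS n1 n2 N r A G1 ∧
      ∀ (G2 : Matrix (Fin n2) (Fin r) ℝ) (R2 : Matrix (Fin n2) (Fin ρ) ℝ) (α : ℝ),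
        (∑ i, ∑ j, (G1 * G2ᵀ + α • (R1 * R2ᵀ)) i j = 1) →
        muAug n1 n2 N r ρ A G1 R1 ≤ (‖A (G1 * G2ᵀ + α • (R1 * R2ᵀ))‖₊ : ℝ≥0∞) :=
  ⟨muAug_le_muALS A G1 R1, muAug_le_nnnorm_add_smul A G1 R1⟩
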